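/- Let Φ, φ, N, H, t, s be as in the higher-dimensional setting, and suppose ∂φ/∂s + (n−1)Hφ is constant on each hypersurface Γ_t, so that it defines a function c(t) of t alone. If u : (−ε, ε) → ℝ is a C² solution of (log u')' = c(t) with u' > 0, then U = u ∘ t is harmonic and critical-point-free on Ω with level-set family {Γ_t}. -/

import Mathlib

/-!
By the inverse function theorem `t` is `C²` near every point of `Ω`, and differentiating
`t ∘ Φ = snd` shows that the Hodge-dual normal is `n = det dΦ • ∇t`; hence `N = ∇t / ‖∇t‖`
and `φ = ‖∇t‖⁻¹`. Writing `∇t = ‖∇t‖ N` gives `Δt = ‖∇t‖ div N + ∂_N ‖∇t‖`, where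
`div N = -m H` because `N` is a unit field and `∂_N ‖∇t‖ = -‖∇t‖² ∂φ/∂s`, so
`Δt = -‖∇t‖² (∂φ/∂s + m H φ) = -‖∇t‖² c(t)`. The chain rule
`Δ(u ∘ t) = u'(t) Δt + u''(t) ‖∇t‖²` then vanishes exactly when `u'' = c u'`.
The level sets of `u ∘ t` are the `Γ_τ` because `u` is strictly increasing.
-/

open scoped InnerProductSpace

/-- The Laplacian of `f` at `p`. -/
noncomputable def lap {n : ℕ} (f : EuclideanSpace ℝ (Fin n) → ℝ)
    (p : EuclideanSpace ℝ (Fin n)) : ℝ :=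
  ∑ i : Fin n,
    ⟪fderiv ℝ (gradient f) p (EuclideanSpace.single i 1), EuclideanSpace.single i (1:ℝ)⟫_ℝ

/-- `∂Φ/∂x_j`, the coordinate tangent vectors of the hypersurfaces `Γ_t : x ↦ Φ(x, t)`. -/
noncomputable def Pd {m : ℕ} (Φ : EuclideanSpace ℝ (Fin m) × ℝ → EuclideanSpace ℝ (Fin (m + 1)))
    (q : EuclideanSpace ℝ (Fin m) × ℝ) (j : Fin m) : EuclideanSpace ℝ (Fin (m + 1)) :=
  fderiv ℝ Φ q (EuclideanSpace.single j 1, 0)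

/-- `∂Φ/∂t`. -/
noncomputable def Pt {m : ℕ} (Φ : EuclideanSpace ℝ (Fin m) × ℝ → EuclideanSpace ℝ (Fin (m + 1)))
    (q : EuclideanSpace ℝ (Fin m) × ℝ) : EuclideanSpace ℝ (Fin (m + 1)) :=
  fderiv ℝ Φ q (0, 1)

/-- The determinant of the square matrix whose first `m` columns are the coordinate
tangent vectors `∂Φ/∂x_j` and whose last column is `w`.  With `w = ∂Φ/∂t` this is
`det dΦ`; as a function of `w` it is `⟪n, w⟫` for the Hodge-dual normal `n` of
`(∂Φ/∂x₁) ∧ ⋯ ∧ (∂Φ/∂x_m)`. -/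
noncomputable def detWith {m : ℕ}
    (Φ : EuclideanSpace ℝ (Fin m) × ℝ → EuclideanSpace ℝ (Fin (m + 1)))
    (q : EuclideanSpace ℝ (Fin m) × ℝ) (w : EuclideanSpace ℝ (Fin (m + 1))) : ℝ :=
  Matrix.det (Matrix.of fun i j : Fin (m + 1) =>
    (Fin.snoc (fun j' : Fin m => Pd Φ q j') w :
      Fin (m + 1) → EuclideanSpace ℝ (Fin (m + 1))) j i)

/-- `det dΦ`, the Jacobian determinant of `Φ`. -/
noncomputable def detJn {m : ℕ}
    (Φ : EuclideanSpace ℝ (Fin m) × ℝ → EuclideanSpace ℝ (Fin (m + 1)))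
    (q : EuclideanSpace ℝ (Fin m) × ℝ) : ℝ :=
  detWith Φ q (Pt Φ q)

open Filter Topology Set InnerProductSpace

section UnitNormal

variable {E : Type*} [NormedAddCommGroup E] [InnerProductSpace ℝ E]

theorem inner_apply_self_eq_zero_of_norm_eq_one {N : E → E} {DN : E →L[ℝ] E} {p : E}
    (hN : HasFDerivAt N DN p) (hunit : ∀ᶠ y in 𝓝 p, ‖N y‖ = 1) (w : E) :
    ⟪DN w, N p⟫_ℝ = 0 := by
  have hconst : (fun y => ⟪N y, N y⟫_ℝ) =ᶠ[𝓝 p] fun _ => (1 : ℝ) :=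
    hunit.mono fun y (hy : ‖N y‖ = 1) => show ⟪N y, N y⟫_ℝ = 1 by
      rw [real_inner_self_eq_norm_sq, hy, one_pow]
  have hzero := congrArg (· w)
    (((hN.inner ℝ hN).congr_of_eventuallyEq hconst.symm).unique (hasFDerivAt_const 1 p))
  simp only [ContinuousLinearMap.coe_comp, Function.comp_apply, ContinuousLinearMap.prod_apply,
    fderivInnerCLM_apply, zero_apply, real_inner_comm (N p)] at hzero
  rw [real_inner_comm]
  linarith

theorem trace_eq_neg_mul_of_forall_orthonormal [FiniteDimensional ℝ E] {m : ℕ}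
    (hE : Module.finrank ℝ E = m + 1) (A : E →ₗ[ℝ] E) {ν : E} (hν : ‖ν‖ = 1)
    (hAν : ⟪A ν, ν⟫_ℝ = 0) {H : ℝ}
    (hH : ∀ b : Fin m → E, Orthonormal ℝ b → (∀ i, ⟪b i, ν⟫_ℝ = 0) →
      H = -(∑ i, ⟪A (b i), b i⟫_ℝ) / m) :
    LinearMap.trace ℝ E A = -(m * H) := by
  obtain ⟨B, hB⟩ := Orthonormal.exists_orthonormalBasis_extension_of_card_eq
    (𝕜 := ℝ) (ι := Fin (m + 1)) (v := fun _ => ν) (s := {Fin.last m}) (by simp [hE])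
    (by simp [hν])
  have hBlast : B (Fin.last m) = ν := hB _ rfl
  have hb : Orthonormal ℝ (fun i : Fin m => B i.castSucc) :=
    B.orthonormal.comp _ (Fin.castSucc_injective m)
  have hbν : ∀ i : Fin m, ⟪B i.castSucc, ν⟫_ℝ = 0 := fun i => by
    rw [← hBlast]; exact B.orthonormal.2 (Fin.castSucc_lt_last i).ne
  rw [LinearMap.trace_eq_sum_inner A B, Fin.sum_univ_castSucc, hBlast, real_inner_comm, hAν,
    hH _ hb hbν]
  rcases Nat.eq_zero_or_pos m with rfl | hm
  · simp
  · simp only [real_inner_comm (B _)]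
    field_simp
    ring

end UnitNormal

section Gradient

variable {F : Type*} [NormedAddCommGroup F] [InnerProductSpace ℝ F] [CompleteSpace F]

theorem gradient_comp {u : ℝ → ℝ} {t : F → ℝ} {p : F} (hu : DifferentiableAt ℝ u (t p))
    (ht : DifferentiableAt ℝ t p) :
    gradient (fun y => u (t y)) p = deriv u (t p) • gradient t p := by
  rw [gradient, show fderiv ℝ (fun y => u (t y)) p = _ from
    (hu.hasDerivAt.comp_hasFDerivAt p ht.hasFDerivAt).fderiv, map_smul, gradient]

theorem ContDiffAt.gradient {t : F → ℝ} {p : F} {k : WithTop ℕ∞}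
    (ht : ContDiffAt ℝ (k + 1) t p) : ContDiffAt ℝ k (gradient t) p :=
  (toDual ℝ F).symm.contDiff.contDiffAt.comp p (ht.fderiv_right le_rfl)

end Gradient

section Laplacian

variable {n : ℕ}

local notation "𝔼" => EuclideanSpace ℝ (Fin n)

theorem lap_eq_trace (f : 𝔼 → ℝ) (p : 𝔼) :
    lap f p = LinearMap.trace ℝ 𝔼 (fderiv ℝ (gradient f) p) := by
  rw [LinearMap.trace_eq_sum_inner _ (EuclideanSpace.basisFun (Fin n) ℝ)]
  simp [lap, real_inner_comm]

theorem lap_eq_of_gradient_eventuallyEq_smul {f h : 𝔼 → ℝ} {F : 𝔼 → 𝔼} {p : 𝔼}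
    (hh : DifferentiableAt ℝ h p) (hF : DifferentiableAt ℝ F p)
    (hfF : gradient f =ᶠ[𝓝 p] fun y => h y • F y) :
    lap f p = h p * LinearMap.trace ℝ 𝔼 (fderiv ℝ F p) + fderiv ℝ h p (F p) := by
  rw [lap_eq_trace, hfF.fderiv_eq, show fderiv ℝ (fun y => h y • F y) p = _ from
    (hh.hasFDerivAt.smul hF.hasFDerivAt).fderiv]
  simp

theorem lap_comp {u : ℝ → ℝ} {t : 𝔼 → ℝ} {p : 𝔼} (hu : ContDiff ℝ 2 u)
    (ht : ContDiffAt ℝ 2 t p) :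
    lap (fun y => u (t y)) p =
      deriv u (t p) * lap t p + deriv (deriv u) (t p) * ‖gradient t p‖ ^ 2 := by
  have hgrad : gradient (fun y => u (t y)) =ᶠ[𝓝 p] fun y => deriv u (t y) • gradient t y :=
    (ht.eventually (by simp)).mono fun y hy =>
      gradient_comp (hu.differentiable two_ne_zero _) (hy.differentiableAt two_ne_zero)
  have htd : DifferentiableAt ℝ t p := ht.differentiableAt two_ne_zero
  have hu't : HasFDerivAt (fun y => deriv u (t y)) (deriv (deriv u) (t p) • fderiv ℝ t p) p :=
    (hu.differentiable_deriv_two _).hasDerivAt.comp_hasFDerivAt p htd.hasFDerivAt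
  rw [lap_eq_of_gradient_eventuallyEq_smul hu't.differentiableAt
      ((ContDiffAt.gradient (k := 1) ht).differentiableAt one_ne_zero) hgrad, ← lap_eq_trace,
    hu't.fderiv, smul_apply, ← inner_gradient_left, real_inner_self_eq_norm_sq, smul_eq_mul]

end Laplacian

theorem eq_fderiv_apply_of_forall_integralCurve {E : Type*} [NormedAddCommGroup E]
    [NormedSpace ℝ E] [CompleteSpace E] {N : E → E} {φ : E → ℝ} {Ω : Set E} {p : E} {d : ℝ}
    (hN : ContDiffAt ℝ 1 N p) (hφ : DifferentiableAt ℝ φ p) (hΩ : Ω ∈ 𝓝 p)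
    (hd : ∀ α : ℝ → E, α 0 = p → (∀ᶠ s in 𝓝 0, α s ∈ Ω ∧ HasDerivAt α (N (α s)) s) →
      HasDerivAt (fun s => φ (α s)) d 0) :
    d = fderiv ℝ φ p (N p) := by
  obtain ⟨α, hα0, δ, hδ, hα⟩ :=
    hN.exists_forall_mem_closedBall_exists_eq_forall_mem_Ioo_hasDerivAt₀ 0
  have hαN : ∀ᶠ s in 𝓝 0, HasDerivAt α (N (α s)) s :=
    eventually_of_mem (Ioo_mem_nhds (by linarith) (by linarith)) hα
  have hαΩ : ∀ᶠ s in 𝓝 0, α s ∈ Ω :=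
    hαN.self_of_nhds.continuousAt.preimage_mem_nhds (by rwa [hα0])
  have hαp : HasDerivAt α (N p) 0 := hα0 ▸ hαN.self_of_nhds
  have hφα : HasDerivAt (fun s => φ (α s)) (fderiv ℝ φ p (N p)) 0 := by
    subst hα0
    exact hφ.hasFDerivAt.comp_hasDerivAt 0 hαp
  exact (hd α hα0 (hαΩ.and hαN)).unique hφα

theorem deriv_deriv_eq_mul_of_hasDerivAt_log {u : ℝ → ℝ} {τ c : ℝ}
    (hu : DifferentiableAt ℝ (deriv u) τ) (hpos : deriv u τ ≠ 0)
    (hlog : HasDerivAt (fun ξ => Real.log (deriv u ξ)) c τ) :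
    deriv (deriv u) τ = c * deriv u τ := by
  rw [hlog.unique (hu.hasDerivAt.log hpos)]
  field_simp

section GradientNormalization

variable {m : ℕ}

local notation "𝔼" => EuclideanSpace ℝ (Fin (m + 1))

theorem lap_eq_neg_sq_norm_gradient_mul {t φ : 𝔼 → ℝ} {N : 𝔼 → 𝔼} {Ω : Set 𝔼} {p : 𝔼}
    {Hp d : ℝ}
    (ht : ContDiffAt ℝ 2 t p) (hgrad : gradient t p ≠ 0)
    (hN : N =ᶠ[𝓝 p] fun y => ‖gradient t y‖⁻¹ • gradient t y)
    (hφ : φ =ᶠ[𝓝 p] fun y => ‖gradient t y‖⁻¹)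
    (hH : ∀ b : Fin m → 𝔼, Orthonormal ℝ b → (∀ i, ⟪b i, N p⟫_ℝ = 0) →
      Hp = -(∑ i, ⟪fderiv ℝ N p (b i), b i⟫_ℝ) / m)
    (hΩ : Ω ∈ 𝓝 p)
    (hd : ∀ α : ℝ → 𝔼, α 0 = p → (∀ᶠ s in 𝓝 0, α s ∈ Ω ∧ HasDerivAt α (N (α s)) s) →
      HasDerivAt (fun s => φ (α s)) d 0) :
    lap t p = -‖gradient t p‖ ^ 2 * (d + m * Hp * φ p) := by
  have hg : ContDiffAt ℝ 1 (gradient t) p := ContDiffAt.gradient (k := 1) ht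
  have hr : ContDiffAt ℝ 1 (fun y => ‖gradient t y‖) p := hg.norm ℝ hgrad
  have hr0 : ‖gradient t p‖ ≠ 0 := norm_ne_zero_iff.2 hgrad
  have hN1 : ContDiffAt ℝ 1 N p := ((hr.inv hr0).smul hg).congr_of_eventuallyEq hN
  have hgne : ∀ᶠ y in 𝓝 p, gradient t y ≠ 0 := hg.continuousAt.eventually_ne hgrad
  have hgN : gradient t =ᶠ[𝓝 p] fun y => ‖gradient t y‖ • N y := by
    filter_upwards [hN, hgne] with y hNy hy
    rw [hNy, smul_smul, mul_inv_cancel₀ (norm_ne_zero_iff.2 hy), one_smul]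
  have hunit : ∀ᶠ y in 𝓝 p, ‖N y‖ = 1 := by
    filter_upwards [hN, hgne] with y hNy hy
    rw [hNy, norm_smul, norm_inv, norm_norm, inv_mul_cancel₀ (norm_ne_zero_iff.2 hy)]
  have htrace : LinearMap.trace ℝ 𝔼 (fderiv ℝ N p) = -(m * Hp) :=
    trace_eq_neg_mul_of_forall_orthonormal finrank_euclideanSpace_fin _ hunit.self_of_nhds
      (inner_apply_self_eq_zero_of_norm_eq_one
        (hN1.differentiableAt one_ne_zero).hasFDerivAt hunit _) hH
  have hrd := (hr.differentiableAt one_ne_zero).hasFDerivAt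
  have hφd : fderiv ℝ φ p = -(‖gradient t p‖ ^ 2)⁻¹ • fderiv ℝ (fun y => ‖gradient t y‖) p := by
    rw [hφ.fderiv_eq]
    exact ((hasDerivAt_inv hr0).comp_hasFDerivAt p hrd).fderiv
  have hφ1 : DifferentiableAt ℝ φ p :=
    ((hr.inv hr0).differentiableAt one_ne_zero).congr_of_eventuallyEq hφ
  have hlap : lap t p = ‖gradient t p‖ * LinearMap.trace ℝ 𝔼 (fderiv ℝ N p) +
      fderiv ℝ (fun y => ‖gradient t y‖) p (N p) :=
    lap_eq_of_gradient_eventuallyEq_smul hrd.differentiableAt (hN1.differentiableAt one_ne_zero)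
      hgN
  rw [hlap, eq_fderiv_apply_of_forall_integralCurve hN1 hφ1 hΩ hd, htrace, hφd, hφ.self_of_nhds,
    smul_apply, smul_eq_mul]
  field_simp
  ring

end GradientNormalization

theorem contDiffAt_of_eventually_comp_eq {E F G : Type*} [NormedAddCommGroup E] [NormedSpace ℝ E]
    [CompleteSpace E] [NormedAddCommGroup F] [NormedSpace ℝ F] [CompleteSpace F]
    [NormedAddCommGroup G] [NormedSpace ℝ G] {n : WithTop ℕ∞} {Φ : E → F} {L : E ≃L[ℝ] F}
    {q : E} {t : F → G} {π : E → G} (hn : n ≠ 0) (hΦ : ContDiffAt ℝ n Φ q)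
    (hL : HasFDerivAt Φ (L : E →L[ℝ] F) q) (hπ : ContDiffAt ℝ n π q)
    (htπ : ∀ᶠ x in 𝓝 q, t (Φ x) = π x) :
    ContDiffAt ℝ n t (Φ q) := by
  set Ψ := hΦ.localInverse hL hn
  have hΨq : Ψ (Φ q) = q := hΦ.localInverse_apply_image hL hn
  have hΨ : ContDiffAt ℝ n Ψ (Φ q) := hΦ.to_localInverse hL hn
  have ht : t =ᶠ[𝓝 (Φ q)] π ∘ Ψ := by
    filter_upwards [(hΦ.hasStrictFDerivAt' hL hn).eventually_right_inverse,
      hΨ.continuousAt.preimage_mem_nhds (hΨq ▸ htπ)] with y hΦΨ (htπy : t (Φ (Ψ y)) = π (Ψ y))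
    exact (congrArg t hΦΨ).symm.trans htπy
  exact ((hΨq ▸ hπ).comp (Φ q) hΨ).congr_of_eventuallyEq ht

theorem inner_gradient_fderiv_eq_snd {E F : Type*} [NormedAddCommGroup E] [NormedSpace ℝ E]
    [NormedAddCommGroup F] [InnerProductSpace ℝ F] [CompleteSpace F] {Φ : E × ℝ → F}
    {t : F → ℝ} {q : E × ℝ} (hΦ : DifferentiableAt ℝ Φ q) (ht : DifferentiableAt ℝ t (Φ q))
    (htΦ : ∀ᶠ x in 𝓝 q, t (Φ x) = x.2) (v : E × ℝ) :
    ⟪gradient t (Φ q), fderiv ℝ Φ q v⟫_ℝ = v.2 := by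
  have hsnd : HasFDerivAt (t ∘ Φ) (ContinuousLinearMap.snd ℝ E ℝ) q :=
    hasFDerivAt_snd.congr_of_eventuallyEq htΦ
  rw [inner_gradient_left, ← ContinuousLinearMap.comp_apply,
    (ht.hasFDerivAt.comp q hΦ.hasFDerivAt).unique hsnd]
  rfl

theorem exists_basis_coe_eq_of_det_ne_zero {k : ℕ} (v : Fin k → EuclideanSpace ℝ (Fin k))
    (hv : (Matrix.of fun i j => v j i).det ≠ 0) :
    ∃ b : Module.Basis (Fin k) ℝ (EuclideanSpace ℝ (Fin k)), ⇑b = v := by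
  set e := (EuclideanSpace.basisFun (Fin k) ℝ).toBasis
  have hdet : e.det v = (Matrix.of fun i j => v j i).det := by
    rw [Module.Basis.det_apply]
    congr 1
  obtain ⟨hli, hspan⟩ := e.is_basis_iff_det.2 (hdet ▸ hv.isUnit)
  exact ⟨.mk hli hspan.ge, Module.Basis.coe_mk _ _⟩

section Coordinates

variable {m : ℕ} {Φ : EuclideanSpace ℝ (Fin m) × ℝ → EuclideanSpace ℝ (Fin (m + 1))}
  {q : EuclideanSpace ℝ (Fin m) × ℝ}

noncomputable def coordFrame (m : ℕ) : Fin (m + 1) → EuclideanSpace ℝ (Fin m) × ℝ :=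
  Fin.snoc (fun j => (EuclideanSpace.single j 1, 0)) (0, 1)

theorem snoc_Pd_Pt_eq :
    (Fin.snoc (Pd Φ q) (Pt Φ q) : Fin (m + 1) → EuclideanSpace ℝ (Fin (m + 1))) =
      fun j => fderiv ℝ Φ q (coordFrame m j) := by
  ext1 j
  induction j using Fin.lastCases <;> simp [coordFrame, Pd, Pt]

theorem detWith_Pd (j : Fin m) : detWith Φ q (Pd Φ q j) = 0 :=
  Matrix.det_zero_of_column_eq (Fin.castSucc_lt_last j).ne fun i => by simp

theorem exists_basis_coe_eq_fderiv_coordFrame (h : detJn Φ q ≠ 0) :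
    ∃ b : Module.Basis (Fin (m + 1)) ℝ (EuclideanSpace ℝ (Fin (m + 1))),
      ⇑b = fun j => fderiv ℝ Φ q (coordFrame m j) :=
  snoc_Pd_Pt_eq (Φ := Φ) ▸ exists_basis_coe_eq_of_det_ne_zero _ h

theorem exists_continuousLinearEquiv_eq_fderiv (h : detJn Φ q ≠ 0) :
    ∃ L : (EuclideanSpace ℝ (Fin m) × ℝ) ≃L[ℝ] EuclideanSpace ℝ (Fin (m + 1)),
      (L : _ →L[ℝ] _) = fderiv ℝ Φ q := by
  obtain ⟨b, hb⟩ := exists_basis_coe_eq_fderiv_coordFrame h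
  have hsurj : Function.Surjective (fderiv ℝ Φ q) := by
    refine LinearMap.range_eq_top.1 (top_le_iff.1 ?_)
    rw [← b.span_eq, Submodule.span_le, hb]
    rintro _ ⟨j, rfl⟩
    exact ⟨_, rfl⟩
  have hdim : Module.finrank ℝ (EuclideanSpace ℝ (Fin m) × ℝ) =
      Module.finrank ℝ (EuclideanSpace ℝ (Fin (m + 1))) := by
    simp [Module.finrank_prod]
  have hinj : Function.Injective (fderiv ℝ Φ q) :=
    (LinearMap.injective_iff_surjective_of_finrank_eq_finrank hdim).2 hsurj
  exact ⟨(LinearEquiv.ofBijective _ ⟨hinj, hsurj⟩).toContinuousLinearEquiv, rfl⟩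

theorem eq_detJn_smul_of_inner_eq_detWith {ν g : EuclideanSpace ℝ (Fin (m + 1))}
    (hdet : detJn Φ q ≠ 0) (hν : ∀ w, ⟪ν, w⟫_ℝ = detWith Φ q w)
    (hg : ∀ v, ⟪g, fderiv ℝ Φ q v⟫_ℝ = v.2) : ν = detJn Φ q • g := by
  obtain ⟨b, hb⟩ := exists_basis_coe_eq_fderiv_coordFrame hdet
  refine ext_inner_right_basis b fun j => ?_
  rw [hν, real_inner_smul_left, hb, hg, ← snoc_Pd_Pt_eq]
  induction j using Fin.lastCases
  · simp [coordFrame, detJn]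
  · simp [coordFrame, detWith_Pd]

theorem contDiffAt_and_eq_detJn_smul_gradient {S : Set (EuclideanSpace ℝ (Fin m) × ℝ)}
    {t : EuclideanSpace ℝ (Fin (m + 1)) → ℝ} {ν : EuclideanSpace ℝ (Fin (m + 1))}
    (hΦ : ContDiffAt ℝ 2 Φ q) (hS : S ∈ 𝓝 q) (ht : ∀ x ∈ S, t (Φ x) = x.2)
    (hdet : detJn Φ q ≠ 0) (hν : ∀ w, ⟪ν, w⟫_ℝ = detWith Φ q w) :
    ContDiffAt ℝ 2 t (Φ q) ∧ ν = detJn Φ q • gradient t (Φ q) ∧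
      ⟪gradient t (Φ q), Pt Φ q⟫_ℝ = 1 := by
  obtain ⟨L, hL⟩ := exists_continuousLinearEquiv_eq_fderiv hdet
  have htΦ : ∀ᶠ x in 𝓝 q, t (Φ x) = x.2 := eventually_of_mem hS ht
  have htC : ContDiffAt ℝ 2 t (Φ q) := contDiffAt_of_eventually_comp_eq two_ne_zero hΦ
    (hL ▸ (hΦ.differentiableAt two_ne_zero).hasFDerivAt) contDiffAt_snd htΦ
  have hg := inner_gradient_fderiv_eq_snd (hΦ.differentiableAt two_ne_zero)
    (htC.differentiableAt two_ne_zero) htΦ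
  exact ⟨htC, eq_detJn_smul_of_inner_eq_detWith hdet hν hg, hg (0, 1)⟩

theorem contDiffAt_and_eq_norm_gradient_inv {S : Set (EuclideanSpace ℝ (Fin m) × ℝ)}
    {t φ : EuclideanSpace ℝ (Fin (m + 1)) → ℝ} {ν : EuclideanSpace ℝ (Fin (m + 1))}
    {N : EuclideanSpace ℝ (Fin (m + 1)) → EuclideanSpace ℝ (Fin (m + 1))}
    (hΦ : ContDiffAt ℝ 2 Φ q) (hS : S ∈ 𝓝 q) (ht : ∀ x ∈ S, t (Φ x) = x.2)
    (hdet : 0 < detJn Φ q) (hν : ∀ w, ⟪ν, w⟫_ℝ = detWith Φ q w)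
    (hN : N (Φ q) = ‖ν‖⁻¹ • ν) (hφ : φ (Φ q) = detJn Φ q / ‖ν‖) :
    ContDiffAt ℝ 2 t (Φ q) ∧ gradient t (Φ q) ≠ 0 ∧ φ (Φ q) = ‖gradient t (Φ q)‖⁻¹ ∧
      N (Φ q) = ‖gradient t (Φ q)‖⁻¹ • gradient t (Φ q) := by
  obtain ⟨htC, hνg, hgPt⟩ := contDiffAt_and_eq_detJn_smul_gradient hΦ hS ht hdet.ne' hν
  have hg : gradient t (Φ q) ≠ 0 := by
    rintro hg
    simp [hg] at hgPt
  have hg' : ‖gradient t (Φ q)‖ ≠ 0 := norm_ne_zero_iff.2 hg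
  refine ⟨htC, hg, ?_, ?_⟩
  · rw [hφ, hνg, norm_smul, Real.norm_of_nonneg hdet.le]
    field_simp
  · rw [hN, hνg, norm_smul, Real.norm_of_nonneg hdet.le, smul_smul]
    field_simp

end Coordinates

section LevelSets

variable {X Y : Type*} {I : Set ℝ} {Φ : X × ℝ → Y} {t : Y → ℝ} {u : ℝ → ℝ}

theorem setOf_comp_eq_image_of_injOn (hu : InjOn u I) (ht : ∀ q ∈ univ ×ˢ I, t (Φ q) = q.2)
    {τ : ℝ} (hτ : τ ∈ I) :
    {p ∈ Φ '' (univ ×ˢ I) | u (t p) = u τ} = (fun x => Φ (x, τ)) '' univ := by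
  ext p
  constructor
  · rintro ⟨⟨⟨x, σ⟩, ⟨-, hσ⟩, rfl⟩, hpτ⟩
    rw [ht _ ⟨mem_univ x, hσ⟩] at hpτ
    exact ⟨x, mem_univ x, congrArg (fun σ => Φ (x, σ)) (hu hσ hτ hpτ).symm⟩
  · rintro ⟨x, -, rfl⟩
    exact ⟨⟨(x, τ), ⟨mem_univ x, hτ⟩, rfl⟩, by rw [ht _ ⟨mem_univ x, hτ⟩]⟩

theorem exists_eq_of_setOf_comp_nonempty (ht : ∀ q ∈ univ ×ˢ I, t (Φ q) = q.2) {k : ℝ}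
    (hk : {p ∈ Φ '' (univ ×ˢ I) | u (t p) = k}.Nonempty) : ∃ τ ∈ I, u τ = k := by
  obtain ⟨_, ⟨q, hq, rfl⟩, hqk⟩ := hk
  exact ⟨q.2, hq.2, by rwa [ht q hq] at hqk⟩

end LevelSets

theorem stmt15_general (m : ℕ) (ε : ℝ)
    (S : Set (EuclideanSpace ℝ (Fin m) × ℝ)) (hS : S = Set.univ ×ˢ Set.Ioo (-ε) ε)
    (Φ : EuclideanSpace ℝ (Fin m) × ℝ → EuclideanSpace ℝ (Fin (m + 1)))
    (hΦ : ContDiffOn ℝ 2 Φ S)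
    (Ω : Set (EuclideanSpace ℝ (Fin (m + 1)))) (hΩ : Ω = Φ '' S) (hΩopen : IsOpen Ω)
    (hdet : ∀ q ∈ S, 0 < detJn Φ q)
    -- nv is the Hodge dual of (∂Φ/∂x₁) ∧ ⋯ ∧ (∂Φ/∂x_m)
    (nv : EuclideanSpace ℝ (Fin m) × ℝ → EuclideanSpace ℝ (Fin (m + 1)))
    (hnv : ∀ q ∈ S, ∀ w, ⟪nv q, w⟫_ℝ = detWith Φ q w)
    -- N = n/‖n‖ as a unit normal field on Ω
    (N : EuclideanSpace ℝ (Fin (m + 1)) → EuclideanSpace ℝ (Fin (m + 1)))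
    (hN : ∀ q ∈ S, N (Φ q) = ‖nv q‖⁻¹ • nv q)
    -- φ = det dΦ/‖n‖ as a function on Ω
    (φ : EuclideanSpace ℝ (Fin (m + 1)) → ℝ)
    (hφ : ∀ q ∈ S, φ (Φ q) = detJn Φ q / ‖nv q‖)
    -- t : Ω → (−ε, ε) is the last component of Φ⁻¹
    (t : EuclideanSpace ℝ (Fin (m + 1)) → ℝ) (ht : ∀ q ∈ S, t (Φ q) = q.2)
    -- H is the mean curvature of the Γ_t with respect to N: minus the averaged
    -- tangential trace of the derivative of the unit normal field N
    (H : EuclideanSpace ℝ (Fin (m + 1)) → ℝ)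
    (hH : ∀ p ∈ Ω, ∀ b : Fin m → EuclideanSpace ℝ (Fin (m + 1)),
      Orthonormal ℝ b → (∀ i, ⟪b i, N p⟫_ℝ = 0) →
      H p = -(∑ i, ⟪fderiv ℝ N p (b i), b i⟫_ℝ) / m)
    -- ∂φ/∂s is the derivative of φ along unit-speed integral curves of N
    (dφds : EuclideanSpace ℝ (Fin (m + 1)) → ℝ)
    (hdφds : ∀ p ∈ Ω, ∀ α : ℝ → EuclideanSpace ℝ (Fin (m + 1)), α 0 = p →
      (∀ᶠ s in nhds 0, α s ∈ Ω ∧ HasDerivAt α (N (α s)) s) →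
      HasDerivAt (fun s => φ (α s)) (dφds p) 0)
    -- ∂φ/∂s + (n−1)Hφ is constant on each Γ_t, defining a function c of t alone
    (c : ℝ → ℝ)
    (hconst : ∀ τ ∈ Set.Ioo (-ε) ε, ∀ x : EuclideanSpace ℝ (Fin m),
      dφds (Φ (x, τ)) + m * H (Φ (x, τ)) * φ (Φ (x, τ)) = c τ)
    -- u is a C² solution of (log u')' = c with u' > 0
    (u : ℝ → ℝ) (hu : ContDiff ℝ 2 u)
    (hu' : ∀ τ ∈ Set.Ioo (-ε) ε, 0 < deriv u τ)
    (hODE : ∀ τ ∈ Set.Ioo (-ε) ε,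
      HasDerivAt (fun ξ => Real.log (deriv u ξ)) (c τ) τ) :
    (∀ p ∈ Ω, lap (fun y => u (t y)) p = 0) ∧
    (∀ p ∈ Ω, gradient (fun y => u (t y)) p ≠ 0) ∧
    (∀ τ ∈ Set.Ioo (-ε) ε, ∃ k : ℝ,
      {p ∈ Ω | u (t p) = k} = (fun x => Φ (x, τ)) '' Set.univ) ∧
    (∀ k : ℝ, {p ∈ Ω | u (t p) = k}.Nonempty → ∃ τ ∈ Set.Ioo (-ε) ε,
      {p ∈ Ω | u (t p) = k} = (fun x => Φ (x, τ)) '' Set.univ) := by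
  subst hS hΩ
  have hfacts : ∀ p ∈ Φ '' (univ ×ˢ Ioo (-ε) ε), ContDiffAt ℝ 2 t p ∧ gradient t p ≠ 0 ∧
      φ p = ‖gradient t p‖⁻¹ ∧ N p = ‖gradient t p‖⁻¹ • gradient t p ∧ t p ∈ Ioo (-ε) ε ∧
      dφds p + m * H p * φ p = c (t p) := by
    rintro _ ⟨⟨x, τ⟩, hq, rfl⟩
    have hSq : univ ×ˢ Ioo (-ε) ε ∈ 𝓝 (x, τ) := (isOpen_univ.prod isOpen_Ioo).mem_nhds hq
    obtain ⟨htC, hg, hφg, hNg⟩ := contDiffAt_and_eq_norm_gradient_inv (hΦ.contDiffAt hSq) hSq ht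
      (hdet _ hq) (hnv _ hq) (hN _ hq) (hφ _ hq)
    rw [ht _ hq]
    exact ⟨htC, hg, hφg, hNg, hq.2, hconst τ hq.2 x⟩
  have hmono : StrictMonoOn u (Ioo (-ε) ε) := strictMonoOn_of_deriv_pos (convex_Ioo _ _)
    hu.continuous.continuousOn fun τ hτ => hu' τ (interior_subset hτ)
  refine ⟨fun p hp => ?_, fun p hp => ?_,
    fun τ hτ => ⟨u τ, setOf_comp_eq_image_of_injOn hmono.injOn ht hτ⟩, fun k hk => ?_⟩
  · obtain ⟨htp, hgp, -, -, hτ, hc⟩ := hfacts p hp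
    have hΩp := hΩopen.mem_nhds hp
    rw [lap_comp hu htp, lap_eq_neg_sq_norm_gradient_mul htp hgp
      (eventually_of_mem hΩp fun y hy => (hfacts y hy).2.2.2.1)
      (eventually_of_mem hΩp fun y hy => (hfacts y hy).2.2.1) (hH p hp) hΩp (hdφds p hp), hc,
      deriv_deriv_eq_mul_of_hasDerivAt_log (hu.differentiable_deriv_two _) (hu' _ hτ).ne'
        (hODE _ hτ)]
    ring
  · obtain ⟨htp, hgp, -, -, hτ, -⟩ := hfacts p hp
    rw [gradient_comp (hu.differentiable two_ne_zero _) (htp.differentiableAt two_ne_zero)]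
    exact smul_ne_zero (hu' _ hτ).ne' hgp
  · obtain ⟨τ, hτ, rfl⟩ := exists_eq_of_setOf_comp_nonempty ht hk
    exact ⟨τ, hτ, setOf_comp_eq_image_of_injOn hmono.injOn ht hτ⟩

theorem stmt15 (m : ℕ) (hm : 1 ≤ m) (ε : ℝ) (hε : 0 < ε)
    (S : Set (EuclideanSpace ℝ (Fin m) × ℝ)) (hS : S = Set.univ ×ˢ Set.Ioo (-ε) ε)
    (Φ : EuclideanSpace ℝ (Fin m) × ℝ → EuclideanSpace ℝ (Fin (m + 1)))
    (hΦ : ContDiffOn ℝ 2 Φ S) (hinj : Set.InjOn Φ S)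
    (Ω : Set (EuclideanSpace ℝ (Fin (m + 1)))) (hΩ : Ω = Φ '' S) (hΩopen : IsOpen Ω)
    (hdet : ∀ q ∈ S, 0 < detJn Φ q)
    -- nv is the Hodge dual of (∂Φ/∂x₁) ∧ ⋯ ∧ (∂Φ/∂x_m)
    (nv : EuclideanSpace ℝ (Fin m) × ℝ → EuclideanSpace ℝ (Fin (m + 1)))
    (hnv : ∀ q ∈ S, ∀ w, ⟪nv q, w⟫_ℝ = detWith Φ q w)
    -- N = n/‖n‖ as a unit normal field on Ω
    (N : EuclideanSpace ℝ (Fin (m + 1)) → EuclideanSpace ℝ (Fin (m + 1)))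
    (hN : ∀ q ∈ S, N (Φ q) = ‖nv q‖⁻¹ • nv q)
    -- φ = det dΦ/‖n‖ as a function on Ω
    (φ : EuclideanSpace ℝ (Fin (m + 1)) → ℝ)
    (hφ : ∀ q ∈ S, φ (Φ q) = detJn Φ q / ‖nv q‖)
    -- t : Ω → (−ε, ε) is the last component of Φ⁻¹
    (t : EuclideanSpace ℝ (Fin (m + 1)) → ℝ) (ht : ∀ q ∈ S, t (Φ q) = q.2)
    -- H is the mean curvature of the Γ_t with respect to N: minus the averaged
    -- tangential trace of the derivative of the unit normal field N
    (H : EuclideanSpace ℝ (Fin (m + 1)) → ℝ)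
    (hH : ∀ p ∈ Ω, ∀ b : Fin m → EuclideanSpace ℝ (Fin (m + 1)),
      Orthonormal ℝ b → (∀ i, ⟪b i, N p⟫_ℝ = 0) →
      H p = -(∑ i, ⟪fderiv ℝ N p (b i), b i⟫_ℝ) / m)
    -- ∂φ/∂s is the derivative of φ along unit-speed integral curves of N
    (dφds : EuclideanSpace ℝ (Fin (m + 1)) → ℝ)
    (hdφds : ∀ p ∈ Ω, ∀ α : ℝ → EuclideanSpace ℝ (Fin (m + 1)), α 0 = p →
      (∀ᶠ s in nhds 0, α s ∈ Ω ∧ HasDerivAt α (N (α s)) s) →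
      HasDerivAt (fun s => φ (α s)) (dφds p) 0)
    -- ∂φ/∂s + (n−1)Hφ is constant on each Γ_t, defining a function c of t alone
    (c : ℝ → ℝ)
    (hconst : ∀ τ ∈ Set.Ioo (-ε) ε, ∀ x : EuclideanSpace ℝ (Fin m),
      dφds (Φ (x, τ)) + m * H (Φ (x, τ)) * φ (Φ (x, τ)) = c τ)
    -- u is a C² solution of (log u')' = c with u' > 0
    (u : ℝ → ℝ) (hu : ContDiff ℝ 2 u)
    (hu' : ∀ τ ∈ Set.Ioo (-ε) ε, 0 < deriv u τ)
    (hODE : ∀ τ ∈ Set.Ioo (-ε) ε,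
      HasDerivAt (fun ξ => Real.log (deriv u ξ)) (c τ) τ) :
    (∀ p ∈ Ω, lap (fun y => u (t y)) p = 0) ∧
    (∀ p ∈ Ω, gradient (fun y => u (t y)) p ≠ 0) ∧
    (∀ τ ∈ Set.Ioo (-ε) ε, ∃ k : ℝ,
      {p ∈ Ω | u (t p) = k} = (fun x => Φ (x, τ)) '' Set.univ) ∧
    (∀ k : ℝ, {p ∈ Ω | u (t p) = k}.Nonempty → ∃ τ ∈ Set.Ioo (-ε) ε,
      {p ∈ Ω | u (t p) = k} = (fun x => Φ (x, τ)) '' Set.univ) :=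
  stmt15_general m ε S hS Φ hΦ Ω hΩ hΩopen hdet nv hnv N hN φ hφ t ht H hH dφds hdφds c hconst u hu
    hu' hODE
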